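/- arXiv:2106.07763 — 2 statements merged into one kernel-verified Lean document; each statement's English description precedes it below -/
import Mathlib

section
/- Representation theorem for translation- and current-invariant relations: let A ⊆ (k×k)×(k×k) be a nonempty relation such that (i) ((φ₁,i₁),(φ₂,i₂)) ∈ A implies i₁ = i₂, (ii) A is invariant under shifting both potentials by any v ∈ k, and (iii) A is an affine subspace of k⁴. Then there exists an affine relation Z ⊆ k × k (an affine subspace of k²) such that A = {((φ₁,i),(φ₂,i)) | (i, φ₂ − φ₁) ∈ Z}. -/
/-!
The map `p ↦ (current, voltage difference)` is linear, so it sends the affine relation `A` to an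
affine `Z ⊆ k × k`. Conversely, two current-conserving points with the same current and voltage
difference differ by a common shift of both potentials, so by translation invariance `A` is the
full preimage of `Z` among current-conserving points.
-/

/-- An affine subspace: either empty or a translate of a linear subspace. -/
def IsAffineSubspace (k : Type*) {V : Type*} [Field k] [AddCommGroup V] [Module k V]
    (A : Set V) : Prop :=
  A = ∅ ∨ ∃ (v : V) (W : Submodule k V), A = (fun w => v + w) '' (W : Set V)

theorem IsAffineSubspace.image {k V W : Type*} [Field k] [AddCommGroup V] [Module k V]
    [AddCommGroup W] [Module k W] (f : V →ₗ[k] W) {A : Set V} (hA : IsAffineSubspace k A) :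
    IsAffineSubspace k (f '' A) := by
  rcases hA with rfl | ⟨v, U, rfl⟩
  · exact Or.inl (Set.image_empty f)
  · refine Or.inr ⟨f v, U.map f, ?_⟩
    simp only [Submodule.map_coe, Set.image_image, map_add]

def portMap (k : Type*) [Ring k] : (k × k) × (k × k) →ₗ[k] k × k where
  toFun p := (p.1.2, p.2.1 - p.1.1)
  map_add' p q := by simp only [Prod.fst_add, Prod.snd_add, Prod.mk_add_mk]; abel_nf
  map_smul' c p := by simp [mul_sub]

theorem mem_of_portMap_eq {k : Type*} [Ring k] {A : Set ((k × k) × (k × k))}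
    (hshift : ∀ (φ₁ i₁ φ₂ i₂ v : k),
      ((φ₁, i₁), (φ₂, i₂)) ∈ A → ((φ₁ + v, i₁), (φ₂ + v, i₂)) ∈ A)
    {p q : (k × k) × (k × k)} (hp : p ∈ A) (hpc : p.1.2 = p.2.2) (hqc : q.1.2 = q.2.2)
    (hpq : portMap k p = portMap k q) : q ∈ A := by
  obtain ⟨⟨φ₁, i₁⟩, ⟨φ₂, i₂⟩⟩ := p
  obtain ⟨⟨ψ₁, j₁⟩, ⟨ψ₂, j₂⟩⟩ := q
  simp only [portMap, LinearMap.coe_mk, AddHom.coe_mk, Prod.mk.injEq] at hpq hpc hqc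
  obtain ⟨rfl, hdiff⟩ := hpq
  convert hshift φ₁ i₁ φ₂ i₂ (ψ₁ - φ₁) hp using 3
  · abel
  · rw [← sub_add_cancel ψ₂ ψ₁, ← hdiff]; abel
  · rw [← hqc, hpc]

theorem representation_theorem_general {k : Type*} [Field k]
    (A : Set ((k × k) × (k × k)))
    (hcons : ∀ p ∈ A, p.1.2 = p.2.2)
    (hshift : ∀ (φ₁ i₁ φ₂ i₂ v : k),
      ((φ₁, i₁), (φ₂, i₂)) ∈ A → ((φ₁ + v, i₁), (φ₂ + v, i₂)) ∈ A)
    (haff : IsAffineSubspace k A) :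
    ∃ Z : Set (k × k), IsAffineSubspace k Z ∧
      A = {p : (k × k) × (k × k) | p.1.2 = p.2.2 ∧ (p.1.2, p.2.1 - p.1.1) ∈ Z} := by
  refine ⟨portMap k '' A, haff.image (portMap k), Set.ext fun q => ⟨?_, ?_⟩⟩
  · intro hq
    exact ⟨hcons q hq, q, hq, rfl⟩
  · rintro ⟨hqc, p, hp, hpq⟩
    exact mem_of_portMap_eq hshift hp (hcons p hp) hqc hpq

/-- Representation theorem: a nonempty, affine, current-conserving,
potential-translation-invariant one-port relation is determined by an affine
relation `Z` between the current and the voltage difference. -/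
theorem representation_theorem {k : Type*} [Field k]
    (A : Set ((k × k) × (k × k))) (hne : A.Nonempty)
    (hcons : ∀ p ∈ A, p.1.2 = p.2.2)
    (hshift : ∀ (φ₁ i₁ φ₂ i₂ v : k),
      ((φ₁, i₁), (φ₂, i₂)) ∈ A → ((φ₁ + v, i₁), (φ₂ + v, i₂)) ∈ A)
    (haff : IsAffineSubspace k A) :
    ∃ Z : Set (k × k), IsAffineSubspace k Z ∧
      A = {p : (k × k) × (k × k) | p.1.2 = p.2.2 ∧ (p.1.2, p.2.1 - p.1.1) ∈ Z} :=
  representation_theorem_general A hcons hshift haff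
end

section
/- Thévenin's theorem (affine form): let A ⊆ ℝ × ℝ be a nonempty affine subspace (relating current i to voltage difference v) such that its direction space c = {a − b | a, b ∈ A} satisfies: (i, v) ∈ c implies i·v ≥ 0. Then exactly one of the following holds: (a) A = {(i, V₀ + R·i) | i ∈ ℝ} for some V₀ ∈ ℝ and R ≥ 0; (b) A = {(I₀, v) | v ∈ ℝ} for some I₀ ∈ ℝ; (c) A is a single point {(I₀, V₀)}. -/
/-!
Passivity says that the direction space `W` of `A` lies in the closed first and third
quadrants. If `W` contained both a vertical vector `(0, s)` and a vector `w` with `w.1 ≠ 0`,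
sliding `w` along `(0, s)` would reach `(w.1, -w.1)`, whose coordinates have product
`-w.1 ^ 2 < 0`. Hence `W` is either a line through a non-vertical vector of nonnegative slope,
the vertical axis, or `0`, and translating by a point of `A` gives the three cases.
-/

section PassiveSubmodule

variable {𝕜 : Type*} [Field 𝕜] {W : Submodule 𝕜 (𝕜 × 𝕜)}

theorem Submodule.coe_eq_setOf_fst_eq_zero {w₀ : 𝕜 × 𝕜} (hfst : ∀ w ∈ W, w.1 = 0)
    (hw₀ : w₀ ∈ W) (h₀ : w₀.2 ≠ 0) : (W : Set (𝕜 × 𝕜)) = {w | w.1 = 0} := by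
  refine Set.Subset.antisymm hfst fun w hw => ?_
  have hscale : w = (w.2 / w₀.2) • w₀ := by
    ext
    · simp [hfst w₀ hw₀, show w.1 = 0 from hw]
    · simp [div_mul_cancel₀ _ h₀]
  rw [SetLike.mem_coe, hscale]
  exact W.smul_mem _ hw₀

variable [LinearOrder 𝕜] [IsStrictOrderedRing 𝕜]

theorem Submodule.fst_eq_zero_of_mem_of_vertical_mem (hW : ∀ w ∈ W, 0 ≤ w.1 * w.2) {s : 𝕜}
    (hs : s ≠ 0) (hsW : ((0 : 𝕜), s) ∈ W) {w : 𝕜 × 𝕜} (hw : w ∈ W) : w.1 = 0 := by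
  by_contra h
  have hmem : w + (-(w.1 + w.2) / s) • ((0 : 𝕜), s) ∈ W := W.add_mem hw (W.smul_mem _ hsW)
  have hslide : w + (-(w.1 + w.2) / s) • ((0 : 𝕜), s) = (w.1, -w.1) := by
    ext
    · simp
    · simp [div_mul_cancel₀ _ hs]
  have := hW _ hmem
  rw [hslide] at this
  nlinarith [mul_self_pos.2 h]

theorem Submodule.coe_eq_setOf_snd_eq_of_passive (hW : ∀ w ∈ W, 0 ≤ w.1 * w.2) {w₀ : 𝕜 × 𝕜}
    (hw₀ : w₀ ∈ W) (h₀ : w₀.1 ≠ 0) : (W : Set (𝕜 × 𝕜)) = {w | w.2 = w₀.2 / w₀.1 * w.1} := by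
  ext w
  constructor
  · intro hw
    have hu : w - (w.1 / w₀.1) • w₀ = ((0 : 𝕜), w.2 - w₀.2 / w₀.1 * w.1) := by
      ext
      · simp [div_mul_cancel₀ _ h₀]
      · simp only [Prod.snd_sub, Prod.smul_snd, smul_eq_mul]
        ring
    have huW : w - (w.1 / w₀.1) • w₀ ∈ W := W.sub_mem hw (W.smul_mem _ hw₀)
    rw [hu] at huW
    by_contra h
    exact h₀ (W.fst_eq_zero_of_mem_of_vertical_mem hW (sub_ne_zero.2 h) huW hw₀)
  · intro hw
    have hscale : w = (w.1 / w₀.1) • w₀ := by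
      ext
      · simp [div_mul_cancel₀ _ h₀]
      · rw [Prod.smul_snd, smul_eq_mul, show w.2 = _ from hw]
        ring
    rw [SetLike.mem_coe, hscale]
    exact W.smul_mem _ hw₀

theorem Submodule.trichotomy_of_passive (hW : ∀ w ∈ W, 0 ≤ w.1 * w.2) :
    (∃ R : 𝕜, 0 ≤ R ∧ (W : Set (𝕜 × 𝕜)) = {w | w.2 = R * w.1}) ∨
    (W : Set (𝕜 × 𝕜)) = {w | w.1 = 0} ∨ W = ⊥ := by
  by_cases hI : ∃ w₀ ∈ W, w₀.1 ≠ 0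
  · obtain ⟨w₀, hw₀, h₀⟩ := hI
    have hR : 0 ≤ w₀.2 / w₀.1 :=
      div_nonneg_iff.2 (mul_nonneg_iff.1 (mul_comm w₀.1 _ ▸ hW w₀ hw₀))
    exact Or.inl ⟨_, hR, W.coe_eq_setOf_snd_eq_of_passive hW hw₀ h₀⟩
  push Not at hI
  by_cases hV : ∃ w₀ ∈ W, w₀.2 ≠ 0
  · obtain ⟨w₀, hw₀, h₀⟩ := hV
    exact Or.inr (Or.inl (W.coe_eq_setOf_fst_eq_zero hI hw₀ h₀))
  push Not at hV
  exact Or.inr (Or.inr (W.eq_bot_iff.2 fun w hw => Prod.ext (hI w hw) (hV w hw)))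

end PassiveSubmodule

/-- Thévenin's theorem (affine form). -/
theorem thevenin (A : Set (ℝ × ℝ)) (hne : A.Nonempty)
    (haff : IsAffineSubspace ℝ A)
    (hpsd : ∀ a ∈ A, ∀ b ∈ A, 0 ≤ (a.1 - b.1) * (a.2 - b.2)) :
    (∃ (V₀ R : ℝ), 0 ≤ R ∧ A = {p : ℝ × ℝ | p.2 = V₀ + R * p.1}) ∨
    (∃ I₀ : ℝ, A = {p : ℝ × ℝ | p.1 = I₀}) ∨
    (∃ I₀ V₀ : ℝ, A = {(I₀, V₀)}) := by
  obtain h | ⟨v, W, rfl⟩ := haff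
  · exact absurd h hne.ne_empty
  have hW : ∀ w ∈ W, 0 ≤ w.1 * w.2 := fun w hw => by
    simpa using hpsd _ ⟨w, hw, rfl⟩ _ ⟨0, W.zero_mem, rfl⟩
  rcases W.trichotomy_of_passive hW with ⟨R, hR, hWR⟩ | hWv | rfl
  · refine Or.inl ⟨v.2 - R * v.1, R, hR, ?_⟩
    rw [hWR, Set.image_add_left]
    ext p
    simp only [Set.mem_preimage, Set.mem_ofPred_eq, Prod.fst_add, Prod.snd_add, Prod.fst_neg,
      Prod.snd_neg]
    constructor <;> intro <;> linarith
  · refine Or.inr (Or.inl ⟨v.1, ?_⟩)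
    rw [hWv, Set.image_add_left]
    ext p
    simp [neg_add_eq_zero, eq_comm]
  · exact Or.inr (Or.inr ⟨v.1, v.2, by simp⟩)
end
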